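/- Let (A,C,ψ) be a weak entwining structure, p : A ⊗ C → A ⊗ C the map p(a ⊗ c) = (μ ⊗ C)(a ⊗ ψ(c ⊗ 1)), and act : (A ⊗ C) ⊗ A → A ⊗ C the map act((a' ⊗ c) ⊗ a) = (μ ⊗ C)(a' ⊗ ψ(c ⊗ a)). Then for all x ∈ A ⊗ C and a, b, a'' ∈ A: (1) act(act(x ⊗ a) ⊗ b) = act(x ⊗ ab); (2) act((a''·x) ⊗ a) = a''·act(x ⊗ a), where a''·(a' ⊗ c) := (a''a') ⊗ c; (3) p(act(x ⊗ a)) = act(x ⊗ a) (the image of p is stable under act); (4) act(p(x) ⊗ a) = act(x ⊗ a); (5) act(p(x) ⊗ 1) = p(x). In particular, the image of p is a unital right A-module under act (this is the (A,A)-bimodule structure on the coring C := Im p). -/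
import Mathlib


/-!
STATEMENT 4: For a weak entwining structure (A,C,ψ), the twisted action `act`
is associative, commutes with left multiplication, stabilises the image of the
projection `p`, factors through `p`, and is unital on the image of `p`.
-/

open TensorProduct

noncomputable section

variable {k A C : Type*} [CommRing k] [Ring A] [Algebra k A]
  [AddCommGroup C] [Module k C] [Coalgebra k C]

/-- The twisted right action `act((a' ⊗ c) ⊗ a) = (μ ⊗ C)(a' ⊗ ψ(c ⊗ a))`. -/
def act (ψ : C ⊗[k] A →ₗ[k] A ⊗[k] C) :
    (A ⊗[k] C) ⊗[k] A →ₗ[k] A ⊗[k] C :=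
  LinearMap.rTensor C (LinearMap.mul' k A) ∘ₗ
    (TensorProduct.assoc k A A C).symm.toLinearMap ∘ₗ
    LinearMap.lTensor A ψ ∘ₗ
    (TensorProduct.assoc k A C A).toLinearMap

/-- `(A ⊗ ε) : A ⊗ C → A` (composed with the canonical iso `A ⊗ k ≅ A`). -/
def epsA : A ⊗[k] C →ₗ[k] A :=
  (TensorProduct.rid k A).toLinearMap ∘ₗ
    LinearMap.lTensor A (Coalgebra.counit (R := k) (A := C))

/-- Left multiplication by `a` on the first tensor factor of `A ⊗ C`. -/
def lmul (a : A) : A ⊗[k] C →ₗ[k] A ⊗[k] C :=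
  LinearMap.rTensor C (LinearMap.mulLeft k a)

/-- `ψ₁ : C → A ⊗ C`, `c ↦ ψ(c ⊗ 1)`. -/
def psiOne (ψ : C ⊗[k] A →ₗ[k] A ⊗[k] C) : C →ₗ[k] A ⊗[k] C :=
  ψ ∘ₗ (TensorProduct.mk k C A).flip 1

/-- `p : A ⊗ C → A ⊗ C`, `p(a ⊗ c) = (μ ⊗ C)(a ⊗ ψ(c ⊗ 1)) = act((a ⊗ c) ⊗ 1)`. -/
def pMap (ψ : C ⊗[k] A →ₗ[k] A ⊗[k] C) : A ⊗[k] C →ₗ[k] A ⊗[k] C :=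
  act ψ ∘ₗ (TensorProduct.mk k (A ⊗[k] C) A).flip 1

lemma act_tmul (ψ : C ⊗[k] A →ₗ[k] A ⊗[k] C) (a : A) (c : C) (b : A) :
    act ψ ((a ⊗ₜ[k] c) ⊗ₜ[k] b) = lmul a (ψ (c ⊗ₜ[k] b)) := by
  simp only [act, lmul, LinearMap.comp_apply, LinearEquiv.coe_coe,
    TensorProduct.assoc_tmul, LinearMap.lTensor_tmul]
  induction ψ (c ⊗ₜ[k] b) using TensorProduct.induction_on with
  | zero => simp
  | tmul a' c' => simp [LinearMap.mul'_apply]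
  | add u v hu hv => simp [tmul_add, hu, hv]

lemma act_lmul (ψ : C ⊗[k] A →ₗ[k] A ⊗[k] C) (x : A ⊗[k] C) (a a'' : A) :
    act ψ (lmul a'' x ⊗ₜ[k] a) = lmul a'' (act ψ (x ⊗ₜ[k] a)) := by
  induction x using TensorProduct.induction_on with
  | zero => simp
  | tmul a' c =>
    rw [lmul, LinearMap.rTensor_tmul, LinearMap.mulLeft_apply, act_tmul, act_tmul]
    simp only [lmul, LinearMap.mulLeft_mul, LinearMap.rTensor_comp, LinearMap.comp_apply]
  | add u v hu hv => simp [map_add, add_tmul, hu, hv]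

theorem statement4 (ψ : C ⊗[k] A →ₗ[k] A ⊗[k] C)
    -- (i) ψ ∘ (C ⊗ μ) = (μ ⊗ C) ∘ (A ⊗ ψ) ∘ (ψ ⊗ A)
    (hmul : ∀ (c : C) (a b : A), ψ (c ⊗ₜ (a * b)) = act ψ (ψ (c ⊗ₜ a) ⊗ₜ b))
    -- (ii) (A ⊗ Δ) ∘ ψ = (ψ ⊗ C) ∘ (C ⊗ ψ) ∘ (Δ ⊗ A)
    (hcomul : LinearMap.lTensor A (Coalgebra.comul (R := k) (A := C)) ∘ₗ ψ =
      (TensorProduct.assoc k A C C).toLinearMap ∘ₗ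
        LinearMap.rTensor C ψ ∘ₗ
        (TensorProduct.assoc k C A C).symm.toLinearMap ∘ₗ
        LinearMap.lTensor C ψ ∘ₗ
        (TensorProduct.assoc k C C A).toLinearMap ∘ₗ
        LinearMap.rTensor A (Coalgebra.comul (R := k) (A := C)))
    -- (iii') Σ a_α ε(c^α) = Σ 1_α a ε(c^α)
    (hcounit' : ∀ (c : C) (a : A),
      epsA (ψ (c ⊗ₜ a)) = epsA (ψ (c ⊗ₜ (1 : A))) * a)
    -- (iv') Σ 1_α ε(c₍₁₎^α) ⊗ c₍₂₎ = Σ 1_α ⊗ c^α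
    (hcomul' : ∀ c : C,
      LinearMap.rTensor C (epsA ∘ₗ psiOne ψ)
          (Coalgebra.comul (R := k) (A := C) c) = ψ (c ⊗ₜ (1 : A))) :
    -- (1) act(act(x ⊗ a) ⊗ b) = act(x ⊗ ab)
    (∀ (x : A ⊗[k] C) (a b : A),
      act ψ (act ψ (x ⊗ₜ a) ⊗ₜ b) = act ψ (x ⊗ₜ (a * b))) ∧
    -- (2) act((a''·x) ⊗ a) = a''·act(x ⊗ a)
    (∀ (x : A ⊗[k] C) (a a'' : A),
      act ψ (lmul a'' x ⊗ₜ a) = lmul a'' (act ψ (x ⊗ₜ a))) ∧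
    -- (3) p(act(x ⊗ a)) = act(x ⊗ a)
    (∀ (x : A ⊗[k] C) (a : A), pMap ψ (act ψ (x ⊗ₜ a)) = act ψ (x ⊗ₜ a)) ∧
    -- (4) act(p(x) ⊗ a) = act(x ⊗ a)
    (∀ (x : A ⊗[k] C) (a : A), act ψ (pMap ψ x ⊗ₜ a) = act ψ (x ⊗ₜ a)) ∧
    -- (5) act(p(x) ⊗ 1) = p(x)
    (∀ x : A ⊗[k] C, act ψ (pMap ψ x ⊗ₜ (1 : A)) = pMap ψ x) := by
  have hp : ∀ x : A ⊗[k] C, pMap ψ x = act ψ (x ⊗ₜ[k] (1 : A)) := fun x => rfl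
  have h1 : ∀ (x : A ⊗[k] C) (a b : A),
      act ψ (act ψ (x ⊗ₜ a) ⊗ₜ b) = act ψ (x ⊗ₜ (a * b)) := by
    intro x a b
    induction x using TensorProduct.induction_on with
    | zero => simp
    | tmul a' c =>
      rw [act_tmul, act_lmul, ← hmul, act_tmul]
    | add u v hu hv => simp [add_tmul, map_add, hu, hv]
  refine ⟨h1, act_lmul ψ, ?_, ?_, ?_⟩
  · intro x a
    rw [hp, h1, mul_one]
  · intro x a
    rw [hp, h1, one_mul]
  · intro x
    rw [hp, h1, mul_one]
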